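/- The group G = ⟨a, b | a^q = b^{p²} = 1, bab^{-1} = a^i⟩ where p < q are primes and i has multiplicative order p² modulo q, has exactly 2q + 2 cyclic subgroups. -/

import Mathlib

/-!
`A = ⟨a⟩` is normal of prime order `q`, and `G ⧸ A` is cyclic of order `p²`, generated by the image
of `b`. As `i` has order `p²` modulo `q`, no element outside `A` commutes with a nontrivial element
of `A`. For a normal subgroup `N` with this property, every `x ∉ N` has the same order as its image
in `G ⧸ N`; so if `c` lifts a generator of a nontrivial cyclic subgroup of `G ⧸ N`, the subgroups
`⟨c * n⟩`, `n ∈ N`, are pairwise distinct and are exactly the cyclic subgroups with that image.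
Hence `numCyclic G = numCyclic N + |N| (numCyclic (G ⧸ N) - 1) = 2 + q (3 - 1)`.
-/

/-- The number of cyclic subgroups of a group `G`. -/
noncomputable def numCyclic (G : Type*) [Group G] : ℕ := Nat.card {H : Subgroup G // IsCyclic H}

open Subgroup

section Counting

variable {G : Type*} [Group G] {N : Subgroup G}

theorem card_cyclic_le : Nat.card {H : Subgroup G // IsCyclic H ∧ H ≤ N} = numCyclic N := by
  symm
  refine Nat.card_eq_of_bijective
    (fun K => ⟨K.1.map N.subtype, ?_, map_subtype_le K.1⟩) ⟨fun K K' h => ?_, ?_⟩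
  · exact (K.1.equivMapOfInjective _ N.subtype_injective).isCyclic.mp K.2
  · exact Subtype.ext (map_injective N.subtype_injective (congrArg Subtype.val h))
  · rintro ⟨H, hH, hHN⟩
    exact ⟨⟨H.subgroupOf N, (subgroupOfEquivOfLe hHN).isCyclic.mpr hH⟩,
      Subtype.ext (map_subgroupOf_eq_of_le hHN)⟩

variable [N.Normal]

theorem orderOf_mk_eq_orderOf (hN : ∀ x ∉ N, ∀ y ∈ N, Commute x y → y = 1) {x : G}
    (hx : x ∉ N) : orderOf (x : G ⧸ N) = orderOf x := by
  refine Nat.dvd_antisymm (orderOf_map_dvd (QuotientGroup.mk' N) x) (orderOf_dvd_of_pow_eq_one ?_)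
  refine hN x hx _ ?_ (Commute.self_pow x _)
  rw [← QuotientGroup.eq_one_iff, QuotientGroup.mk_pow, pow_orderOf_eq_one]

theorem eq_of_mem_zpowers_of_mk_eq (hN : ∀ x ∉ N, ∀ y ∈ N, Commute x y → y = 1) {x y : G}
    (hx : x ∉ N) (hy : y ∈ zpowers x) (hxy : (x : G ⧸ N) = y) : x = y := by
  obtain ⟨k, rfl⟩ := mem_zpowers_iff.mp hy
  have hk : (x : G ⧸ N) ^ (k - 1) = 1 := by
    rw [zpow_sub_one, mul_inv_eq_one, ← QuotientGroup.mk_zpow, hxy]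
  rw [← orderOf_dvd_iff_zpow_eq_one, orderOf_mk_eq_orderOf hN hx, orderOf_dvd_iff_zpow_eq_one,
    zpow_sub_one, mul_inv_eq_one] at hk
  exact hk.symm

theorem exists_zpowers_mul_eq (hN : ∀ x ∉ N, ∀ y ∈ N, Commute x y → y = 1) {x c : G}
    (hx : x ∉ N) (hc : zpowers (c : G ⧸ N) = zpowers (x : G ⧸ N)) :
    ∃ n ∈ N, zpowers (c * n) = zpowers x := by
  obtain ⟨k, hk⟩ := mem_zpowers_iff.mp (hc ▸ mem_zpowers (c : G ⧸ N))
  refine ⟨c⁻¹ * x ^ k, QuotientGroup.eq.mp (by rw [QuotientGroup.mk_zpow, hk]), ?_⟩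
  rw [mul_inv_cancel_left]
  refine le_antisymm (zpowers_le.mpr (zpow_mem (mem_zpowers x) k)) (zpowers_le.mpr ?_)
  obtain ⟨j, hj⟩ := mem_zpowers_iff.mp (hc.symm ▸ mem_zpowers (x : G ⧸ N))
  have hxj : x = (x ^ k) ^ j := by
    refine eq_of_mem_zpowers_of_mk_eq hN hx (zpow_mem (zpow_mem (mem_zpowers x) k) j) ?_
    rw [QuotientGroup.mk_zpow, QuotientGroup.mk_zpow, hk, hj]
  have hmem : (x ^ k) ^ j ∈ zpowers (x ^ k) := zpow_mem (mem_zpowers _) j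
  rwa [← hxj] at hmem

theorem card_cyclic_not_le (hN : ∀ x ∉ N, ∀ y ∈ N, Commute x y → y = 1) :
    Nat.card {H : Subgroup G // IsCyclic H ∧ ¬H ≤ N} =
      Nat.card N * Nat.card {K : Subgroup (G ⧸ N) // IsCyclic K ∧ K ≠ ⊥} := by
  have hlift : ∀ K : {K : Subgroup (G ⧸ N) // IsCyclic K ∧ K ≠ ⊥},
      ∃ c : G, zpowers (c : G ⧸ N) = K := fun K => by
    obtain ⟨γ, hγ⟩ := (K.1.isCyclic_iff_exists_zpowers_eq_top).mp K.2.1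
    obtain ⟨c, rfl⟩ := QuotientGroup.mk_surjective γ
    exact ⟨c, hγ⟩
  choose c hc using hlift
  have hcn : ∀ (n : N) K, (c K * n : G) ∉ N := fun n K h => K.2.2 <| by
    rw [← hc K, ← QuotientGroup.mk_mul_of_mem _ n.2, (QuotientGroup.eq_one_iff _).mpr h,
      zpowers_one_eq_bot]
  rw [← Nat.card_prod]
  symm
  refine Nat.card_eq_of_bijective
    (fun nK => ⟨zpowers (c nK.2 * nK.1), inferInstance,
      fun h => hcn nK.1 nK.2 (h (mem_zpowers _))⟩) ⟨?_, ?_⟩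
  · rintro ⟨n, K⟩ ⟨n', K'⟩ h
    have h : zpowers (c K * n : G) = zpowers (c K' * n') := congrArg Subtype.val h
    have hK : K = K' := by
      have := congrArg (map (QuotientGroup.mk' N)) h
      simp only [MonoidHom.map_zpowers, QuotientGroup.coe_mk', QuotientGroup.mk_mul_of_mem _ n.2,
        QuotientGroup.mk_mul_of_mem _ n'.2, hc] at this
      exact Subtype.ext this
    subst hK
    have hmem : (c K * n' : G) ∈ zpowers (c K * n) := h ▸ mem_zpowers _
    have := eq_of_mem_zpowers_of_mk_eq hN (hcn n K) hmem
      (by rw [QuotientGroup.mk_mul_of_mem _ n.2, QuotientGroup.mk_mul_of_mem _ n'.2])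
    rw [Prod.mk.injEq, Subtype.ext_iff]
    exact ⟨mul_left_cancel this, rfl⟩
  · rintro ⟨H, hH, hHN⟩
    obtain ⟨x, rfl⟩ := (H.isCyclic_iff_exists_zpowers_eq_top).mp hH
    have hx : x ∉ N := fun h => hHN (zpowers_le.mpr h)
    let K : {K : Subgroup (G ⧸ N) // IsCyclic K ∧ K ≠ ⊥} :=
      ⟨zpowers (x : G ⧸ N), inferInstance, by rwa [Ne, zpowers_eq_bot, QuotientGroup.eq_one_iff]⟩
    obtain ⟨n, hn, hnx⟩ := exists_zpowers_mul_eq hN hx (hc K)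
    exact ⟨(⟨n, hn⟩, K), Subtype.ext hnx⟩

theorem numCyclic_eq_of_commute [Finite G] (hN : ∀ x ∉ N, ∀ y ∈ N, Commute x y → y = 1) :
    numCyclic G = numCyclic N + Nat.card N * (numCyclic (G ⧸ N) - 1) := by
  have hsplit : numCyclic G = Nat.card {H : Subgroup G // IsCyclic H ∧ H ≤ N} +
      Nat.card {H : Subgroup G // IsCyclic H ∧ ¬H ≤ N} :=
    (Set.ncard_inter_add_ncard_sdiff_eq_ncard {H : Subgroup G | IsCyclic H} {H | H ≤ N}).symm
  have hbot : Nat.card {K : Subgroup (G ⧸ N) // IsCyclic K ∧ K ≠ ⊥} = numCyclic (G ⧸ N) - 1 :=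
    Set.ncard_sdiff_singleton_of_mem (s := {K : Subgroup (G ⧸ N) | IsCyclic K})
      (show IsCyclic (⊥ : Subgroup (G ⧸ N)) from inferInstance)
  rw [hsplit, card_cyclic_le, card_cyclic_not_le hN, hbot]

end Counting

section Cyclic

variable {G : Type*} [Group G] [IsCyclic G] [Finite G]

theorem IsCyclic.coe_subgroup_eq_setOf_pow_eq_one (H : Subgroup G) :
    (H : Set G) = {x | x ^ Nat.card H = 1} := by
  classical
  have := Fintype.ofFinite G
  refine Set.eq_of_subset_of_ncard_le
    (fun x hx => orderOf_dvd_iff_pow_eq_one.mp (Subgroup.orderOf_dvd_natCard H hx)) ?_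
  rw [Set.ncard_eq_toFinset_card', Set.toFinset_ofPred, ← Nat.card_coe_set_eq]
  exact IsCyclic.card_pow_eq_one_le Nat.card_pos

theorem numCyclic_eq_card_divisors : numCyclic G = (Nat.card G).divisors.card := by
  rw [numCyclic, ← Nat.card_eq_finsetCard,
    Nat.card_congr (Equiv.subtypeUnivEquiv fun H : Subgroup G => (inferInstance : IsCyclic H))]
  refine Nat.card_eq_of_bijective (fun H => ⟨Nat.card H,
    Nat.mem_divisors.mpr ⟨card_subgroup_dvd_card H, Nat.card_pos.ne'⟩⟩) ⟨fun H K h => ?_, ?_⟩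
  · have h : Nat.card H = Nat.card K := congrArg Subtype.val h
    apply SetLike.coe_injective
    rw [IsCyclic.coe_subgroup_eq_setOf_pow_eq_one, IsCyclic.coe_subgroup_eq_setOf_pow_eq_one, h]
  · rintro ⟨d, hd⟩
    obtain ⟨hdvd, -⟩ := Nat.mem_divisors.mp hd
    obtain ⟨g, hg⟩ := IsCyclic.exists_ofOrder_eq_natCard (α := G)
    rw [← hg] at hdvd
    refine ⟨zpowers (g ^ (orderOf g / d)), Subtype.ext ?_⟩
    change Nat.card (zpowers _) = d
    have hg0 : orderOf g ≠ 0 := (orderOf_pos g).ne'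
    rw [Nat.card_zpowers, orderOf_pow_of_dvd ((Nat.div_ne_zero_iff_of_dvd hdvd).mpr
      ⟨hg0, ne_zero_of_dvd_ne_zero hg0 hdvd⟩) (Nat.div_dvd_of_dvd hdvd), Nat.div_div_self hdvd hg0]

end Cyclic

section Presentation

variable {G : Type*} [Group G] {a b : G}

theorem conj_pow_eq_pow_pow {i : ℕ} (h : b * a * b⁻¹ = a ^ i) (k : ℕ) :
    b ^ k * a * (b ^ k)⁻¹ = a ^ i ^ k := by
  induction k with
  | zero => simp
  | succ k ih =>
    calc b ^ (k + 1) * a * (b ^ (k + 1))⁻¹ = b * (b ^ k * a * (b ^ k)⁻¹) * b⁻¹ := by group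
      _ = a ^ i ^ (k + 1) := by rw [ih, ← conj_pow, h, ← pow_mul, pow_succ']

theorem zpowers_normal_of_closure_pair_eq_top [Finite G] {i : ℕ}
    (hgen : closure {a, b} = ⊤) (h : b * a * b⁻¹ = a ^ i) : (zpowers a).Normal := by
  rw [← normalizer_eq_top_iff, eq_top_iff, ← hgen, closure_le, Set.insert_subset_iff,
    Set.singleton_subset_iff]
  refine ⟨le_normalizer (mem_zpowers a), mem_normalizer_fintype ?_⟩
  rintro _ ⟨k, rfl⟩
  rw [← conj_zpow, h]
  exact zpow_mem (pow_mem (mem_zpowers a) i) k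

theorem zpowers_mk_eq_top_of_closure_pair_eq_top [(zpowers a).Normal]
    (hgen : closure {a, b} = ⊤) : zpowers (b : G ⧸ zpowers a) = ⊤ := by
  have := congrArg (map (QuotientGroup.mk' (zpowers a))) hgen
  rwa [MonoidHom.map_closure, Set.image_pair, QuotientGroup.coe_mk',
    (QuotientGroup.eq_one_iff a).mpr (mem_zpowers a), closure_insert_one, ← zpowers_eq_closure,
    map_top_of_surjective _ (QuotientGroup.mk'_surjective _)] at this

theorem pow_eq_one_of_commute_of_conj_eq_pow {i : ℕ} (h : b * a * b⁻¹ = a ^ i)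
    (hib : orderOf b ∣ orderOf (i : ZMod (orderOf a))) {k : ℕ} (hk : Commute (b ^ k) a) :
    b ^ k = 1 := by
  have hik : a ^ i ^ k = a ^ 1 := by
    rw [← conj_pow_eq_pow_pow h, hk.eq, mul_inv_cancel_right, pow_one]
  rw [pow_eq_pow_iff_modEq, ← ZMod.natCast_eq_natCast_iff, Nat.cast_pow, Nat.cast_one,
    ← orderOf_dvd_iff_pow_eq_one] at hik
  exact orderOf_dvd_iff_pow_eq_one.mp (hib.trans hik)

theorem eq_one_of_commute_of_notMem_zpowers [Finite G] [(zpowers a).Normal]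
    (ha : (orderOf a).Prime) (hb : zpowers (b : G ⧸ zpowers a) = ⊤)
    (hba : ∀ k : ℕ, Commute (b ^ k) a → b ^ k = 1) :
    ∀ x ∉ zpowers a, ∀ y ∈ zpowers a, Commute x y → y = 1 := by
  intro x hx y hy hxy
  by_contra hy1
  have hya : zpowers y = zpowers a := by
    refine eq_of_le_of_card_ge (zpowers_le.mpr hy) ?_
    rw [Nat.card_zpowers, Nat.card_zpowers]
    refine ((ha.eq_one_or_self_of_dvd _ (orderOf_dvd_of_mem_zpowers hy)).resolve_left ?_).ge
    rwa [orderOf_eq_one_iff]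
  obtain ⟨m, hm⟩ := mem_zpowers_iff.mp (hya ▸ mem_zpowers a)
  have hxa : Commute x a := hm ▸ hxy.zpow_right m
  obtain ⟨k, hk⟩ := (Submonoid.mem_powers_iff _ _).mp
    (mem_powers_iff_mem_zpowers.mpr (hb ▸ mem_top (x : G ⧸ zpowers a)))
  have hn : x * (b ^ k)⁻¹ ∈ zpowers a := by
    rw [← QuotientGroup.eq_one_iff, QuotientGroup.mk_mul, QuotientGroup.mk_inv,
      QuotientGroup.mk_pow, hk, mul_inv_cancel]
  obtain ⟨j, hj⟩ := mem_zpowers_iff.mp hn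
  have hbk : b ^ k = (x * (b ^ k)⁻¹)⁻¹ * x := by group
  have hbka : Commute (b ^ k) a := by
    rw [hbk, ← hj]
    exact ((Commute.refl a).zpow_left j).inv_left.mul_left hxa
  rw [hba k hbka, inv_one, mul_one] at hn
  exact hx hn

end Presentation

theorem stmt_8_general (G : Type*) [Group G] [Finite G] (p q i : ℕ) (hp : p.Prime) (hq : q.Prime)
    (hi : orderOf (i : ZMod q) = p ^ 2)
    (a b : G) (ha : a ^ q = 1) (hb : b ^ (p ^ 2) = 1) (hrel : b * a * b⁻¹ = a ^ i)
    (hgen : Subgroup.closure {a, b} = ⊤) (hcard : Nat.card G = q * p ^ 2) :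
    numCyclic G = 2 * q + 2 := by
  have := Fact.mk hq
  have := zpowers_normal_of_closure_pair_eq_top hgen hrel
  have hbA := zpowers_mk_eq_top_of_closure_pair_eq_top hgen
  have hoa : orderOf a = q := by
    refine orderOf_eq_prime ha fun ha1 => ?_
    rw [ha1, closure_insert_one, ← zpowers_eq_closure] at hgen
    have := Nat.le_of_dvd (pow_pos hp.pos 2) (orderOf_dvd_of_pow_eq_one hb)
    rw [← Nat.card_zpowers, hgen, card_top, hcard] at this
    nlinarith [hq.two_le, hp.pos]
  have hA : Nat.card (zpowers a) = q := by rw [Nat.card_zpowers, hoa]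
  have hGA : Nat.card (G ⧸ zpowers a) = p ^ 2 := by
    have := card_eq_card_quotient_mul_card_subgroup (zpowers a)
    rw [hcard, hA, mul_comm q] at this
    exact Nat.eq_of_mul_eq_mul_right hq.pos this.symm
  have := isCyclic_iff_exists_zpowers_eq_top.mpr ⟨_, hbA⟩
  have hba (k : ℕ) : Commute (b ^ k) a → b ^ k = 1 :=
    pow_eq_one_of_commute_of_conj_eq_pow hrel (hoa ▸ hi ▸ orderOf_dvd_of_pow_eq_one hb)
  rw [numCyclic_eq_of_commute (eq_one_of_commute_of_notMem_zpowers (hoa ▸ hq) hbA hba),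
    numCyclic_eq_card_divisors, numCyclic_eq_card_divisors, hA, hGA, hq.divisors, Nat.divisors_prime_pow hp,
    Finset.card_pair hq.one_lt.ne, Finset.card_map, Finset.card_range]
  ring

/-- The group `⟨a, b | a^q = b^(p²) = 1, b a b⁻¹ = a^i⟩`, where `p < q` are primes and
`i` has multiplicative order `p²` modulo `q`, has exactly `2q + 2` cyclic subgroups. -/
theorem stmt_8 (G : Type*) [Group G] [Finite G] (p q i : ℕ) (hp : p.Prime) (hq : q.Prime)
    (hpq : p < q) (hi : orderOf (i : ZMod q) = p ^ 2)
    (a b : G) (ha : a ^ q = 1) (hb : b ^ (p ^ 2) = 1) (hrel : b * a * b⁻¹ = a ^ i)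
    (hgen : Subgroup.closure {a, b} = ⊤) (hcard : Nat.card G = q * p ^ 2) :
    numCyclic G = 2 * q + 2 :=
  stmt_8_general G p q i hp hq hi a b ha hb hrel hgen hcard
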